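/- arXiv:2102.05214 — 2 statements merged into one kernel-verified Lean document; each statement's English description precedes it below -/
import Mathlib

section
/- Suppose ‖Aᵏ‖_op ≤ τ ρᵏ for all k ≥ 0 and ‖Δ‖_op ≤ ε. Then for every k ≥ 1, ‖(A + Δ)ᵏ − Aᵏ‖_op ≤ τ(ρ + τε)ᵏ − τρᵏ, and this is at most k τ² (ρ + τ ε)^{k−1} ε. -/
open scoped Matrix.Norms.L2Operator
open Finset


/-- The ℓ₂ → ℓ₂ operator (spectral) norm of a matrix. -/
noncomputable def opNorm {𝕜 : Type*} [RCLike 𝕜] {m n : Type*} [Fintype m] [Fintype n]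
    [DecidableEq n] (M : Matrix m n 𝕜) : ℝ :=
  ‖(Matrix.toEuclideanLin M).toContinuousLinearMap‖

lemma opNorm_eq {d : ℕ} (M : Matrix (Fin d) (Fin d) ℝ) : opNorm M = ‖M‖ :=
  (Matrix.l2_opNorm_def M).symm

lemma pow_sub_pow_eq {R : Type*} [Ring R] (x y : R) :
    ∀ k : ℕ, y ^ k - x ^ k = ∑ i ∈ range k, x ^ i * (y - x) * y ^ (k - 1 - i) := by
  intro k
  induction k with
  | zero => simp
  | succ k ih =>
    rw [Finset.sum_range_succ']
    have : ∀ i ∈ range k, x ^ (i+1) * (y - x) * y ^ (k + 1 - 1 - (i+1)) =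
        x * (x ^ i * (y - x) * y ^ (k - 1 - i)) := by
      intro i hi
      rw [show k + 1 - 1 - (i+1) = k - 1 - i from by omega, pow_succ', mul_assoc, mul_assoc,
        mul_assoc]
    rw [Finset.sum_congr rfl this, ← Finset.mul_sum, ← ih]
    simp only [pow_zero, one_mul, Nat.add_sub_cancel, Nat.sub_zero]
    rw [pow_succ, pow_succ]
    rw [pow_mul_comm', pow_mul_comm']; noncomm_ring

/-- If `‖Aᵏ‖_op ≤ τ ρᵏ` for all `k ≥ 0` and `‖Δ‖_op ≤ ε`, then for every `k ≥ 1`,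
`‖(A + Δ)ᵏ − Aᵏ‖_op ≤ τ(ρ + τε)ᵏ − τρᵏ ≤ k τ² (ρ + τ ε)^{k−1} ε`. -/
theorem perturbed_power_difference_bound {d : ℕ} (A Δ : Matrix (Fin d) (Fin d) ℝ) (τ ρ ε : ℝ)
    (hτ : 0 < τ) (hρ : 0 < ρ) (hε : 0 < ε)
    (hA : ∀ k : ℕ, opNorm (A ^ k) ≤ τ * ρ ^ k) (hΔ : opNorm Δ ≤ ε) :
    ∀ k : ℕ, 1 ≤ k →
      opNorm ((A + Δ) ^ k - A ^ k) ≤ τ * (ρ + τ * ε) ^ k - τ * ρ ^ k ∧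
      τ * (ρ + τ * ε) ^ k - τ * ρ ^ k ≤ (k : ℝ) * τ ^ 2 * (ρ + τ * ε) ^ (k - 1) * ε := by
  simp only [opNorm_eq] at hA hΔ ⊢
  set s : ℝ := ρ + τ * ε with hs_def
  have hτε : 0 < τ * ε := mul_pos hτ hε
  have hρs : ρ ≤ s := by simp [hs_def]; positivity
  have hs : 0 < s := lt_of_lt_of_le hρ hρs
  set B : Matrix (Fin d) (Fin d) ℝ := A + Δ with hB_def
  have hBA : B - A = Δ := by rw [hB_def]; abel
  -- real geometric sum identity
  have key : ∀ k : ℕ, (∑ i ∈ range k, ρ ^ i * s ^ (k - 1 - i)) * (τ * ε) = s ^ k - ρ ^ k := by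
    intro k
    have hrefl : (∑ i ∈ range k, ρ ^ i * s ^ (k - 1 - i))
        = ∑ i ∈ range k, s ^ i * ρ ^ (k - 1 - i) := by
      rw [← Finset.sum_range_reflect]
      refine Finset.sum_congr rfl fun i hi => ?_
      rw [mem_range] at hi
      rw [show k - 1 - (k - 1 - i) = i from by omega, mul_comm]
    rw [hrefl, show τ * ε = s - ρ from by rw [hs_def]; ring, geom_sum₂_mul]
  -- bound on powers of B
  have hB : ∀ k : ℕ, ‖B ^ k‖ ≤ τ * s ^ k := by
    intro k
    induction k using Nat.strong_induction_on with
    | _ k ih =>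
      rcases Nat.eq_zero_or_pos k with rfl | hk
      · simpa using hA 0
      · have hdecomp : B ^ k = A ^ k + ∑ i ∈ range k, A ^ i * Δ * B ^ (k - 1 - i) := by
          rw [← hBA, ← pow_sub_pow_eq]; abel
        have hterm : ∀ i ∈ range k, ‖A ^ i * Δ * B ^ (k - 1 - i)‖
            ≤ (τ * ρ ^ i) * ε * (τ * s ^ (k - 1 - i)) := by
          intro i hi
          rw [mem_range] at hi
          have h1 : ‖A ^ i * Δ * B ^ (k - 1 - i)‖ ≤ ‖A ^ i‖ * ‖Δ‖ * ‖B ^ (k - 1 - i)‖ :=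
            (norm_mul_le _ _).trans
              (mul_le_mul_of_nonneg_right (norm_mul_le _ _) (norm_nonneg _))
          refine h1.trans ?_
          have h2 := ih (k - 1 - i) (by omega)
          exact mul_le_mul
            (mul_le_mul (hA i) hΔ (norm_nonneg _) (by positivity))
            h2 (norm_nonneg _) (by positivity)
        calc ‖B ^ k‖ ≤ ‖A ^ k‖ + ‖∑ i ∈ range k, A ^ i * Δ * B ^ (k - 1 - i)‖ := by
              rw [hdecomp]; exact norm_add_le _ _
          _ ≤ τ * ρ ^ k + ∑ i ∈ range k, (τ * ρ ^ i) * ε * (τ * s ^ (k - 1 - i)) := by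
              gcongr
              · exact hA k
              · exact (norm_sum_le _ _).trans (Finset.sum_le_sum hterm)
          _ = τ * ρ ^ k + τ * ((∑ i ∈ range k, ρ ^ i * s ^ (k - 1 - i)) * (τ * ε)) := by
              rw [Finset.sum_mul, Finset.mul_sum]
              congr 1
              refine Finset.sum_congr rfl fun i _ => ?_
              ring
          _ = τ * s ^ k := by rw [key]; ring
  intro k hk
  constructor
  · -- first inequality
    have hdecomp : B ^ k - A ^ k = ∑ i ∈ range k, A ^ i * Δ * B ^ (k - 1 - i) := by
      rw [← hBA, ← pow_sub_pow_eq]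
    have hterm : ∀ i ∈ range k, ‖A ^ i * Δ * B ^ (k - 1 - i)‖
        ≤ (τ * ρ ^ i) * ε * (τ * s ^ (k - 1 - i)) := by
      intro i hi
      have h1 : ‖A ^ i * Δ * B ^ (k - 1 - i)‖ ≤ ‖A ^ i‖ * ‖Δ‖ * ‖B ^ (k - 1 - i)‖ :=
        (norm_mul_le _ _).trans
          (mul_le_mul_of_nonneg_right (norm_mul_le _ _) (norm_nonneg _))
      refine h1.trans ?_
      exact mul_le_mul
        (mul_le_mul (hA i) hΔ (norm_nonneg _) (by positivity))
        (hB _) (norm_nonneg _) (by positivity)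
    calc ‖B ^ k - A ^ k‖ ≤ ∑ i ∈ range k, (τ * ρ ^ i) * ε * (τ * s ^ (k - 1 - i)) := by
          rw [hdecomp]; exact (norm_sum_le _ _).trans (Finset.sum_le_sum hterm)
      _ = τ * ((∑ i ∈ range k, ρ ^ i * s ^ (k - 1 - i)) * (τ * ε)) := by
          rw [Finset.sum_mul, Finset.mul_sum]
          refine Finset.sum_congr rfl fun i _ => ?_
          ring
      _ = τ * s ^ k - τ * ρ ^ k := by rw [key]; ring
  · -- second inequality
    have hsum : (∑ i ∈ range k, s ^ i * ρ ^ (k - 1 - i)) ≤ (k : ℝ) * s ^ (k - 1) := by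
      calc (∑ i ∈ range k, s ^ i * ρ ^ (k - 1 - i))
          ≤ ∑ i ∈ range k, s ^ (k - 1) := by
            refine Finset.sum_le_sum fun i hi => ?_
            rw [mem_range] at hi
            calc s ^ i * ρ ^ (k - 1 - i) ≤ s ^ i * s ^ (k - 1 - i) := by
                  gcongr
              _ = s ^ (k - 1) := by rw [← pow_add]; congr 1; omega
        _ = (k : ℝ) * s ^ (k - 1) := by rw [Finset.sum_const, card_range, nsmul_eq_mul]
    have hgeom : s ^ k - ρ ^ k = (∑ i ∈ range k, s ^ i * ρ ^ (k - 1 - i)) * (s - ρ) :=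
      (geom_sum₂_mul ..).symm
    have hsρ : s - ρ = τ * ε := by rw [hs_def]; ring
    have : s ^ k - ρ ^ k ≤ (k : ℝ) * s ^ (k - 1) * (τ * ε) := by
      rw [hgeom, hsρ]
      exact mul_le_mul_of_nonneg_right hsum hτε.le
    calc τ * s ^ k - τ * ρ ^ k = τ * (s ^ k - ρ ^ k) := by ring
      _ ≤ τ * ((k : ℝ) * s ^ (k - 1) * (τ * ε)) :=
          mul_le_mul_of_nonneg_left this hτ.le
      _ = (k : ℝ) * τ ^ 2 * s ^ (k - 1) * ε := by ring
end

section
/- Suppose ‖[Â, B̂] − [A, B]‖_op ≤ ε with ε ≤ (max_{ω∈[0,2π]} 2‖(e^{iω}I − A)⁻¹‖_op)⁻¹, and let U_ℓ ⪰ 0 be Hermitian matrices with Σ_{ℓ=1}^k tr(U_ℓ) ≤ k² γ². Then the difference of frequency-domain Gramians (1/k)‖Σ_ℓ (e^{iω_ℓ}I − Â)⁻¹ B̂ U_ℓ B̂ᴴ (e^{iω_ℓ}I − Â)⁻ᴴ − Σ_ℓ (e^{iω_ℓ}I − A)⁻¹ B U_ℓ Bᴴ (e^{iω_ℓ}I −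 A)⁻ᴴ‖_op is bounded by C₁ε + C₂ε² + C₃ε³, where C₁ = max_ω kγ² ‖(e^{iω}I−A)⁻¹‖_op² ‖B‖_op (16‖(e^{iω}I−A)⁻¹‖_op‖B‖_op + 2), C₂ = max_ω kγ² ‖(e^{iω}I−A)⁻¹‖_op² (32‖(e^{iω}I−A)⁻¹‖_op‖B‖_op + 2), and C₃ = max_ω 16 kγ² ‖(e^{iω}I−A)⁻¹‖_op³. -/
/-! The resolvent identity `(M - E)⁻¹ - M⁻¹ = (M - E)⁻¹ E M⁻¹` with `‖M⁻¹‖ ≤ R` and `Rε ≤ 1/2`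
first gives `‖(M - E)⁻¹‖ ≤ 2R` and then `‖(M - E)⁻¹ - M⁻¹‖ ≤ 2R²ε`. Applied to
`M = e^{iω_ℓ} - A`, `E = Â - A` this bounds `‖Ĝ_ℓ - G_ℓ‖` by `δ = 2R²ε‖B‖ + 2R²ε² + Rε`, while
`‖G_ℓ‖ ≤ R‖B‖`. Each Gramian term then moves by at most `‖U_ℓ‖ δ (2R‖B‖ + δ)`, and
`‖U_ℓ‖ ≤ tr U_ℓ` for positive semidefinite `U_ℓ`; summing over `ℓ` and absorbing the higher powers
of `ε` with `Rε ≤ 1/2` gives the cubic bound.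

Since the inverse of a singular matrix is `0`, the bound on `‖(e^{iω} - A)⁻¹‖` does not by itself
make `e^{iω} - A` invertible. This follows because the spectrum of `A` is finite: points of the
circle arbitrarily close to `e^{iω}` lie in the resolvent set, and a resolvent bounded by `R`
there pushes `e^{iω}` into the resolvent set as well. -/

open Matrix
open scoped ComplexOrder

open scoped Matrix.Norms.L2Operator

section NormedRing

variable {𝔸 : Type*} [NormedRing 𝔸] {a e : 𝔸} {R ε : ℝ}

theorem Ring.inverse_sub_sub_inverse (ha : IsUnit a) (hae : IsUnit (a - e)) :
    Ring.inverse (a - e) - Ring.inverse a = Ring.inverse (a - e) * e * Ring.inverse a := by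
  simpa using Ring.inverse_sub_inverse (iff_of_true hae ha)

variable [HasSummableGeomSeries 𝔸]

theorem IsUnit.add_of_norm_inverse_mul_lt {t : 𝔸} (ha : IsUnit a)
    (h : ‖Ring.inverse a‖ * ‖t‖ < 1) : IsUnit (a + t) := by
  nontriviality 𝔸
  obtain ⟨u, rfl⟩ := ha
  rw [Ring.inverse_unit] at h
  have ht : ‖t‖ < ‖(↑u⁻¹ : 𝔸)‖⁻¹ * 1 :=
    (lt_inv_mul_iff₀ (Units.norm_pos u⁻¹)).2 h
  rw [mul_one] at ht
  simpa using (u.add t ht).isUnit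

theorem IsUnit.sub_of_norm_le (ha : IsUnit a)
    (hR : ‖Ring.inverse a‖ ≤ R) (he : ‖e‖ ≤ ε) (hRε : R * ε < 1) : IsUnit (a - e) := by
  rw [sub_eq_add_neg]
  refine ha.add_of_norm_inverse_mul_lt (lt_of_le_of_lt ?_ hRε)
  rw [norm_neg]
  exact mul_le_mul hR he (norm_nonneg _) ((norm_nonneg _).trans hR)

theorem norm_inverse_sub_le (ha : IsUnit a) (hR : ‖Ring.inverse a‖ ≤ R) (he : ‖e‖ ≤ ε)
    (hRε : R * ε ≤ 1 / 2) : ‖Ring.inverse (a - e)‖ ≤ 2 * R := by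
  have hR0 : 0 ≤ R := (norm_nonneg _).trans hR
  have hε0 : 0 ≤ ε := (norm_nonneg _).trans he
  have hae := ha.sub_of_norm_le hR he (by linarith)
  set x := ‖Ring.inverse (a - e)‖
  have hx : x ≤ R + x * ε * R :=
    calc x = ‖Ring.inverse a + Ring.inverse (a - e) * e * Ring.inverse a‖ := by
          rw [← Ring.inverse_sub_sub_inverse ha hae, add_sub_cancel]
      _ ≤ ‖Ring.inverse a‖ + ‖Ring.inverse (a - e) * e * Ring.inverse a‖ := norm_add_le _ _
      _ ≤ ‖Ring.inverse a‖ + x * ‖e‖ * ‖Ring.inverse a‖ := by gcongr; exact norm_mul₃_le ..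
      _ ≤ R + x * ε * R := by gcongr
  nlinarith [norm_nonneg (Ring.inverse (a - e))]

theorem norm_inverse_sub_sub_inverse_le (ha : IsUnit a) (hR : ‖Ring.inverse a‖ ≤ R)
    (he : ‖e‖ ≤ ε) (hRε : R * ε ≤ 1 / 2) :
    ‖Ring.inverse (a - e) - Ring.inverse a‖ ≤ 2 * R ^ 2 * ε := by
  have hR0 : 0 ≤ R := (norm_nonneg _).trans hR
  have hε0 : 0 ≤ ε := (norm_nonneg _).trans he
  rw [Ring.inverse_sub_sub_inverse ha (ha.sub_of_norm_le hR he (by linarith))]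
  calc _ ≤ ‖Ring.inverse (a - e)‖ * ‖e‖ * ‖Ring.inverse a‖ := norm_mul₃_le ..
    _ ≤ 2 * R * ε * R := by gcongr; exact norm_inverse_sub_le ha hR he hRε
    _ = 2 * R ^ 2 * ε := by ring

end NormedRing

theorem exists_mem_Ioo_circleMap_notMem {S : Set ℂ} (hS : S.Finite) (c : ℂ) {r : ℝ} (hr : r ≠ 0)
    (θ : ℝ) {δ : ℝ} (hδ : 0 < δ) : ∃ θ' ∈ Set.Ioo θ (θ + δ), circleMap c r θ' ∉ S := by
  set I := Set.Ioo θ (θ + min δ (2 * Real.pi))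
  have hinj : I.InjOn (circleMap c r) :=
    (injOn_circleMap_of_abs_sub_le' hr (by simp)).mono Set.Ioo_subset_Ico_self
  have hfin : (I ∩ circleMap c r ⁻¹' S).Finite :=
    Set.Finite.of_finite_image (hS.subset (by simp [Set.image_subset_iff]))
      (hinj.mono Set.inter_subset_left)
  obtain ⟨θ', hθ'I, hθ'S⟩ :=
    ((Set.Ioo_infinite (lt_add_of_pos_right θ (lt_min hδ Real.two_pi_pos))).sdiff hfin).nonempty
  exact ⟨θ', Set.Ioo_subset_Ioo_right (by simp) hθ'I, fun h => hθ'S ⟨hθ'I, h⟩⟩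

namespace spectrum

variable {𝔸 : Type*} [NormedRing 𝔸] [NormedAlgebra ℂ 𝔸] [HasSummableGeomSeries 𝔸]

theorem mem_resolventSet_of_norm_resolvent_mul_lt {a : 𝔸} {z w : ℂ} (hz : z ∈ resolventSet ℂ a)
    (h : ‖resolvent a z‖ * (‖w - z‖ * ‖(1 : 𝔸)‖) < 1) : w ∈ resolventSet ℂ a := by
  rw [mem_resolventSet_iff] at hz ⊢
  have hsplit : algebraMap ℂ 𝔸 w - a = (algebraMap ℂ 𝔸 z - a) + algebraMap ℂ 𝔸 (w - z) := by
    rw [map_sub]; abel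
  rw [hsplit]
  exact hz.add_of_norm_inverse_mul_lt (by rwa [norm_algebraMap])

theorem circleMap_mem_resolventSet {a : 𝔸} (ha : (spectrum ℂ a).Finite) {c : ℂ} {r R : ℝ}
    (hr : r ≠ 0) (hR : ∀ θ, ‖resolvent a (circleMap c r θ)‖ ≤ R) (θ : ℝ) :
    circleMap c r θ ∈ resolventSet ℂ a := by
  have hR0 : 0 ≤ R := (norm_nonneg _).trans (hR 0)
  set K := |r| * ‖(1 : 𝔸)‖
  obtain ⟨θ', hθ', hθ'a⟩ :=
    exists_mem_Ioo_circleMap_notMem ha c hr θ (inv_pos.2 (by positivity : 0 < R * K + 1))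
  refine mem_resolventSet_of_norm_resolvent_mul_lt
    (mem_resolventSet_iff.2 (notMem_iff.1 hθ'a)) ?_
  have hdist : ‖circleMap c r θ - circleMap c r θ'‖ ≤ |r| * |θ - θ'| := by
    simpa [← dist_eq_norm, Real.dist_eq] using (lipschitzWith_circleMap c r).dist_le_mul θ θ'
  have hclose : |θ - θ'| ≤ (R * K + 1)⁻¹ := by
    rw [abs_sub_comm, abs_of_pos (sub_pos.2 hθ'.1)]
    linarith [hθ'.2]
  calc ‖resolvent a (circleMap c r θ')‖ * (‖circleMap c r θ - circleMap c r θ'‖ * ‖(1 : 𝔸)‖)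
      ≤ R * (|r| * |θ - θ'| * ‖(1 : 𝔸)‖) := by gcongr; exact hR θ'
    _ = R * K * |θ - θ'| := by ring
    _ ≤ R * K * (R * K + 1)⁻¹ := by gcongr
    _ < 1 := by rw [mul_inv_lt_iff₀ (by positivity)]; linarith

end spectrum

theorem opNorm_eq_l2_opNorm {𝕜 : Type*} [RCLike 𝕜] {m n : Type*} [Fintype m] [Fintype n]
    [DecidableEq n] (M : Matrix m n 𝕜) : opNorm M = ‖M‖ :=
  (l2_opNorm_def M).symm

namespace Matrix

theorem fromCols_sub_fromCols {m n₁ n₂ α : Type*} [Sub α] (X X' : Matrix m n₁ α)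
    (Y Y' : Matrix m n₂ α) : fromCols X Y - fromCols X' Y' = fromCols (X - X') (Y - Y') := by
  ext i (j | j) <;> rfl

variable {𝕜 : Type*} [RCLike 𝕜] {m n : Type*} [Fintype m] [Fintype n] [DecidableEq n]

theorem l2_opNorm_one_le : ‖(1 : Matrix n n 𝕜)‖ ≤ 1 := by
  have h := l2_opNorm_conjTranspose_mul_self (1 : Matrix n n 𝕜)
  rw [conjTranspose_one, mul_one] at h
  nlinarith [norm_nonneg (1 : Matrix n n 𝕜)]

theorem l2_opNorm_le_one_of_conjTranspose_mul_self_eq_one {P : Matrix m n 𝕜}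
    (hP : Pᴴ * P = 1) : ‖P‖ ≤ 1 := by
  have h := l2_opNorm_conjTranspose_mul_self P
  rw [hP] at h
  nlinarith [norm_nonneg P, l2_opNorm_one_le (𝕜 := 𝕜) (n := n)]

theorem l2_opNorm_mul_le_of_conjTranspose_mul_self_eq_one {l : Type*} [Fintype l] [DecidableEq l]
    (A : Matrix m n 𝕜) {P : Matrix n l 𝕜} (hP : Pᴴ * P = 1) : ‖A * P‖ ≤ ‖A‖ :=
  (l2_opNorm_mul A P).trans
    (mul_le_of_le_one_right (norm_nonneg _) (l2_opNorm_le_one_of_conjTranspose_mul_self_eq_one hP))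

section Blocks

variable {n₁ n₂ : Type*} [Fintype n₁] [Fintype n₂] [DecidableEq n₁] [DecidableEq n₂]

theorem l2_opNorm_le_fromCols_left (X : Matrix m n₁ 𝕜) (Y : Matrix m n₂ 𝕜) :
    ‖X‖ ≤ ‖fromCols X Y‖ := by
  simpa [fromCols_mul_fromRows] using
    l2_opNorm_mul_le_of_conjTranspose_mul_self_eq_one (fromCols X Y)
      (P := fromRows (1 : Matrix n₁ n₁ 𝕜) 0)
      (by simp [conjTranspose_fromRows_eq_fromCols_conjTranspose, fromCols_mul_fromRows])

theorem l2_opNorm_le_fromCols_right (X : Matrix m n₁ 𝕜) (Y : Matrix m n₂ 𝕜) :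
    ‖Y‖ ≤ ‖fromCols X Y‖ := by
  simpa [fromCols_mul_fromRows] using
    l2_opNorm_mul_le_of_conjTranspose_mul_self_eq_one (fromCols X Y)
      (P := fromRows 0 (1 : Matrix n₂ n₂ 𝕜))
      (by simp [conjTranspose_fromRows_eq_fromCols_conjTranspose, fromCols_mul_fromRows])

end Blocks

theorem PosSemidef.l2_opNorm_le_re_trace {U : Matrix n n 𝕜} (hU : U.PosSemidef) :
    ‖U‖ ≤ RCLike.re U.trace := by
  have hev : ∀ i, 0 ≤ hU.1.eigenvalues i := hU.eigenvalues_nonneg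
  have hspec := hU.1.spectral_theorem
  rw [Unitary.conjStarAlgAut_apply, ← Unitary.coe_star] at hspec
  rw [hU.1.trace_eq_sum_eigenvalues, map_sum]
  calc ‖U‖ = ‖RCLike.ofReal ∘ hU.1.eigenvalues‖ := by
        conv_lhs => rw [hspec]
        rw [CStarRing.norm_mul_coe_unitary, CStarRing.norm_coe_unitary_mul, l2_opNorm_diagonal]
    _ ≤ ∑ i, RCLike.re (hU.1.eigenvalues i : 𝕜) := by
        simp only [RCLike.ofReal_re]
        refine (pi_norm_le_iff_of_nonneg (Finset.sum_nonneg fun i _ => hev i)).2 fun i => ?_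
        rw [Function.comp_apply, RCLike.norm_ofReal, abs_of_nonneg (hev i)]
        exact Finset.single_le_sum (fun j _ => hev j) (Finset.mem_univ i)

section Gramian

variable [DecidableEq m]

theorem l2_opNorm_mul_mul_conjTranspose_sub_le (G G' : Matrix m n 𝕜) (U : Matrix n n 𝕜) :
    ‖G' * U * G'ᴴ - G * U * Gᴴ‖ ≤ ‖U‖ * (‖G' - G‖ * (2 * ‖G‖ + ‖G' - G‖)) := by
  have hG' : ‖G'‖ ≤ ‖G‖ + ‖G' - G‖ := norm_le_insert' G' G
  have hsplit : G' * U * G'ᴴ - G * U * Gᴴ = (G' - G) * U * G'ᴴ + G * U * (G' - G)ᴴ := by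
    simp only [conjTranspose_sub, Matrix.sub_mul, Matrix.mul_sub]
    abel
  calc ‖G' * U * G'ᴴ - G * U * Gᴴ‖
      ≤ ‖G' - G‖ * ‖U‖ * ‖G'ᴴ‖ + ‖G‖ * ‖U‖ * ‖(G' - G)ᴴ‖ := by
        rw [hsplit]
        refine (norm_add_le _ _).trans (add_le_add ?_ ?_) <;>
          exact (l2_opNorm_mul _ _).trans (by gcongr; exact l2_opNorm_mul _ _)
    _ ≤ ‖G' - G‖ * ‖U‖ * (‖G‖ + ‖G' - G‖) + ‖G‖ * ‖U‖ * ‖G' - G‖ := by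
        rw [l2_opNorm_conjTranspose, l2_opNorm_conjTranspose]
        gcongr
    _ = ‖U‖ * (‖G' - G‖ * (2 * ‖G‖ + ‖G' - G‖)) := by ring

theorem l2_opNorm_inv_mul_sub_inv_mul_le {M E : Matrix m m 𝕜} {B B' : Matrix m n 𝕜} {R ε : ℝ}
    (hM : IsUnit M) (hR : ‖M⁻¹‖ ≤ R) (hE : ‖E‖ ≤ ε) (hB : ‖B' - B‖ ≤ ε) (hRε : R * ε ≤ 1 / 2) :
    ‖(M - E)⁻¹ * B' - M⁻¹ * B‖ ≤ 2 * R ^ 2 * ε * ‖B‖ + 2 * R ^ 2 * ε ^ 2 + R * ε := by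
  rw [nonsing_inv_eq_ringInverse] at hR ⊢
  rw [nonsing_inv_eq_ringInverse]
  have hdiff := norm_inverse_sub_sub_inverse_le hM hR hE hRε
  have hsplit : Ring.inverse (M - E) * B' - Ring.inverse M * B
      = (Ring.inverse (M - E) - Ring.inverse M) * B
        + (Ring.inverse (M - E) - Ring.inverse M) * (B' - B) + Ring.inverse M * (B' - B) := by
    simp only [Matrix.sub_mul, Matrix.mul_sub]
    abel
  have hR0 : 0 ≤ R := (norm_nonneg _).trans hR
  have hε0 : 0 ≤ ε := (norm_nonneg _).trans hE
  rw [hsplit]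
  refine (norm_add₃_le ..).trans ?_
  calc _ ≤ 2 * R ^ 2 * ε * ‖B‖ + 2 * R ^ 2 * ε * ε + R * ε := by
        gcongr <;> refine (l2_opNorm_mul _ _).trans ?_ <;> gcongr
    _ = _ := by ring

theorem l2_opNorm_sum_gramian_sub_le {ι : Type*} [Fintype ι] {G G' : ι → Matrix m n 𝕜}
    {U : ι → Matrix n n 𝕜} {g δ : ℝ} (hU : ∀ i, (U i).PosSemidef) (hG : ∀ i, ‖G i‖ ≤ g)
    (hGG' : ∀ i, ‖G' i - G i‖ ≤ δ) :
    ‖∑ i, G' i * U i * (G' i)ᴴ - ∑ i, G i * U i * (G i)ᴴ‖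
      ≤ RCLike.re (∑ i, (U i).trace) * (δ * (2 * g + δ)) := by
  rw [← Finset.sum_sub_distrib, map_sum, Finset.sum_mul]
  refine (norm_sum_le _ _).trans (Finset.sum_le_sum fun i _ => ?_)
  have hUi := (hU i).l2_opNorm_le_re_trace
  have htr : 0 ≤ RCLike.re (U i).trace := (norm_nonneg _).trans hUi
  have hGi := hG i
  have hDi := hGG' i
  have hδ : 0 ≤ δ := (norm_nonneg _).trans hDi
  refine (l2_opNorm_mul_mul_conjTranspose_sub_le _ _ _).trans ?_
  gcongr

end Gramian

theorem isUnit_exp_smul_one_sub {A : Matrix n n ℂ} {R : ℝ}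
    (hR : ∀ θ : ℝ, ‖(Complex.exp (θ * Complex.I) • (1 : Matrix n n ℂ) - A)⁻¹‖ ≤ R) (θ : ℝ) :
    IsUnit (Complex.exp (θ * Complex.I) • (1 : Matrix n n ℂ) - A) := by
  have hcircle : ∀ θ : ℝ, circleMap 0 1 θ = Complex.exp (θ * Complex.I) := by
    simp [circleMap]
  have hres : ∀ θ : ℝ, ‖resolvent A (circleMap 0 1 θ)‖ ≤ R := by
    simpa [hcircle, resolvent, Algebra.algebraMap_eq_smul_one, nonsing_inv_eq_ringInverse] using hR
  simpa [hcircle, spectrum.mem_resolventSet_iff, Algebra.algebraMap_eq_smul_one] using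
    spectrum.circleMap_mem_resolventSet A.finite_spectrum one_ne_zero hres θ

end Matrix

theorem gramian_perturbation_coeff_le {R b ε : ℝ} (hR : 0 ≤ R) (hb : 0 ≤ b) (hε : 0 ≤ ε)
    (hRε : R * ε ≤ 1 / 2) :
    (2 * R ^ 2 * ε * b + 2 * R ^ 2 * ε ^ 2 + R * ε)
        * (2 * (R * b) + (2 * R ^ 2 * ε * b + 2 * R ^ 2 * ε ^ 2 + R * ε))
      ≤ R ^ 2 * b * (16 * R * b + 2) * ε + R ^ 2 * (32 * R * b + 2) * ε ^ 2 + 16 * R ^ 3 * ε ^ 3 := by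
  have h : 0 ≤ 1 / 2 - R * ε := by linarith
  nlinarith [mul_nonneg h (by positivity : (0:ℝ) ≤ R ^ 3 * ε ^ 3),
    mul_nonneg h (by positivity : (0:ℝ) ≤ R ^ 3 * b * ε ^ 2),
    mul_nonneg h (by positivity : (0:ℝ) ≤ R ^ 3 * b ^ 2 * ε),
    (by positivity : (0:ℝ) ≤ R ^ 2 * ε ^ 2), (by positivity : (0:ℝ) ≤ R ^ 3 * ε ^ 3),
    (by positivity : (0:ℝ) ≤ R ^ 3 * b * ε ^ 2), (by positivity : (0:ℝ) ≤ R ^ 3 * b ^ 2 * ε)]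

theorem freq_gramian_perturbation_general {d p : ℕ}
    (A Ahat : Matrix (Fin d) (Fin d) ℂ) (B Bhat : Matrix (Fin d) (Fin p) ℂ)
    (k : ℕ) (γ ε R : ℝ)
    (U : Fin k → Matrix (Fin p) (Fin p) ℂ) (hU : ∀ ℓ, (U ℓ).PosSemidef)
    (htr : (∑ ℓ, (U ℓ).trace).re ≤ (k : ℝ) ^ 2 * γ ^ 2)
    (hR : ∀ ω : ℝ, opNorm
      ((Complex.exp ((ω : ℂ) * Complex.I) • (1 : Matrix (Fin d) (Fin d) ℂ) - A)⁻¹) ≤ R)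
    (hε : ε ≤ (2 * R)⁻¹)
    (hpert : opNorm (Matrix.fromCols Ahat Bhat - Matrix.fromCols A B) ≤ ε)
    (G Ghat : Fin k → Matrix (Fin d) (Fin p) ℂ)
    (hG : ∀ ℓ : Fin k, G ℓ =
      (Complex.exp (((2 * Real.pi * ((ℓ : ℕ) + 1) / k : ℝ) : ℂ) * Complex.I) • 1 - A)⁻¹ * B)
    (hGhat : ∀ ℓ : Fin k, Ghat ℓ =
      (Complex.exp (((2 * Real.pi * ((ℓ : ℕ) + 1) / k : ℝ) : ℂ) * Complex.I) • 1 - Ahat)⁻¹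
        * Bhat) :
    (1 / (k : ℝ)) * opNorm (∑ ℓ, Ghat ℓ * U ℓ * (Ghat ℓ)ᴴ - ∑ ℓ, G ℓ * U ℓ * (G ℓ)ᴴ)
      ≤ (k * γ ^ 2 * R ^ 2 * opNorm B * (16 * R * opNorm B + 2)) * ε
        + (k * γ ^ 2 * R ^ 2 * (32 * R * opNorm B + 2)) * ε ^ 2
        + (16 * k * γ ^ 2 * R ^ 3) * ε ^ 3 := by
  simp only [opNorm_eq_l2_opNorm] at hR hpert ⊢
  have hR0 : 0 ≤ R := (norm_nonneg _).trans (hR 0)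
  have hε0 : 0 ≤ ε := (norm_nonneg _).trans hpert
  have hRε : R * ε ≤ 1 / 2 :=
    calc R * ε ≤ R * (2 * R)⁻¹ := by gcongr
      _ = 2⁻¹ * (R * R⁻¹) := by ring
      _ ≤ 1 / 2 := by rw [one_div]; exact mul_le_of_le_one_right (by norm_num) mul_inv_le_one
  rw [Matrix.fromCols_sub_fromCols] at hpert
  have hA : ‖Ahat - A‖ ≤ ε := (Matrix.l2_opNorm_le_fromCols_left _ _).trans hpert
  have hB : ‖Bhat - B‖ ≤ ε := (Matrix.l2_opNorm_le_fromCols_right _ _).trans hpert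
  have hGB : ∀ ℓ, ‖G ℓ‖ ≤ R * ‖B‖ := fun ℓ => by
    rw [hG ℓ]
    exact (Matrix.l2_opNorm_mul _ _).trans (by gcongr; exact hR _)
  have hGG : ∀ ℓ, ‖Ghat ℓ - G ℓ‖ ≤ 2 * R ^ 2 * ε * ‖B‖ + 2 * R ^ 2 * ε ^ 2 + R * ε := fun ℓ => by
    rw [hG ℓ, hGhat ℓ, ← sub_sub_sub_cancel_right _ Ahat A]
    exact Matrix.l2_opNorm_inv_mul_sub_inv_mul_le (Matrix.isUnit_exp_smul_one_sub hR _) (hR _)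
      hA hB hRε
  set δ := 2 * R ^ 2 * ε * ‖B‖ + 2 * R ^ 2 * ε ^ 2 + R * ε
  have hsum : ‖∑ ℓ, Ghat ℓ * U ℓ * (Ghat ℓ)ᴴ - ∑ ℓ, G ℓ * U ℓ * (G ℓ)ᴴ‖
      ≤ k ^ 2 * γ ^ 2 * (δ * (2 * (R * ‖B‖) + δ)) :=
    (Matrix.l2_opNorm_sum_gramian_sub_le hU hGB hGG).trans (by rw [RCLike.re_to_complex]; gcongr)
  calc _ ≤ 1 / (k : ℝ) * (k ^ 2 * γ ^ 2 * (δ * (2 * (R * ‖B‖) + δ))) := by gcongr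
    _ = ((k : ℝ)⁻¹ * k * k) * γ ^ 2 * (δ * (2 * (R * ‖B‖) + δ)) := by ring
    _ ≤ k * γ ^ 2 * (R ^ 2 * ‖B‖ * (16 * R * ‖B‖ + 2) * ε + R ^ 2 * (32 * R * ‖B‖ + 2) * ε ^ 2
          + 16 * R ^ 3 * ε ^ 3) := by
        rw [inv_mul_mul_self]
        gcongr
        exact gramian_perturbation_coeff_le hR0 (norm_nonneg B) hε0 hRε
    _ = _ := by ring

/-- perturbation bound for frequency-domain Gramians. Here `R` bounds
`‖(e^{iω}I − A)⁻¹‖_op` for all `ω` (in particular the max over `[0, 2π]`), `ε ≤ (2R)⁻¹`,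
the `U_ℓ` are PSD with `Σ_ℓ tr(U_ℓ) ≤ k²γ²`, and `G_ℓ = (e^{iω_ℓ}I − A)⁻¹ B` (resp. `Ĝ_ℓ`)
with `ω_ℓ = 2πℓ/k`. Then
`(1/k)‖Σ_ℓ Ĝ_ℓ U_ℓ Ĝ_ℓᴴ − Σ_ℓ G_ℓ U_ℓ G_ℓᴴ‖_op ≤ C₁ε + C₂ε² + C₃ε³` with
`C₁ = kγ²R²‖B‖(16R‖B‖+2)`, `C₂ = kγ²R²(32R‖B‖+2)`, `C₃ = 16kγ²R³`. -/
theorem freq_gramian_perturbation {d p : ℕ}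
    (A Ahat : Matrix (Fin d) (Fin d) ℂ) (B Bhat : Matrix (Fin d) (Fin p) ℂ)
    (k : ℕ) (hk : 0 < k) (γ ε R : ℝ)
    (U : Fin k → Matrix (Fin p) (Fin p) ℂ) (hU : ∀ ℓ, (U ℓ).PosSemidef)
    (htr : (∑ ℓ, (U ℓ).trace).re ≤ (k : ℝ) ^ 2 * γ ^ 2)
    (hR : ∀ ω : ℝ, opNorm
      ((Complex.exp ((ω : ℂ) * Complex.I) • (1 : Matrix (Fin d) (Fin d) ℂ) - A)⁻¹) ≤ R)
    (hε : ε ≤ (2 * R)⁻¹)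
    (hpert : opNorm (Matrix.fromCols Ahat Bhat - Matrix.fromCols A B) ≤ ε)
    (G Ghat : Fin k → Matrix (Fin d) (Fin p) ℂ)
    (hG : ∀ ℓ : Fin k, G ℓ =
      (Complex.exp (((2 * Real.pi * ((ℓ : ℕ) + 1) / k : ℝ) : ℂ) * Complex.I) • 1 - A)⁻¹ * B)
    (hGhat : ∀ ℓ : Fin k, Ghat ℓ =
      (Complex.exp (((2 * Real.pi * ((ℓ : ℕ) + 1) / k : ℝ) : ℂ) * Complex.I) • 1 - Ahat)⁻¹
        * Bhat) :
    (1 / (k : ℝ)) * opNorm (∑ ℓ, Ghat ℓ * U ℓ * (Ghat ℓ)ᴴ - ∑ ℓ, G ℓ * U ℓ * (G ℓ)ᴴ)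
      ≤ (k * γ ^ 2 * R ^ 2 * opNorm B * (16 * R * opNorm B + 2)) * ε
        + (k * γ ^ 2 * R ^ 2 * (32 * R * opNorm B + 2)) * ε ^ 2
        + (16 * k * γ ^ 2 * R ^ 3) * ε ^ 3 :=
  freq_gramian_perturbation_general A Ahat B Bhat k γ ε R U hU htr hR hε hpert G Ghat hG hGhat
end
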